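/- Let n ≥ 1, N = 2^n, 0 ≤ ε ≤ 1, and let E be an N×N unitary matrix over ℂ with |Tr(E)| ≥ N(1 − ε²). Let Q = ∑_{P ∈ 𝒫_n} q_P·P be any N×N unitary matrix over ℂ with Pauli coefficients q_P = Tr(Q·P)/N. Then for each P' ∈ 𝒫_n: (1 − ε²)·|q_{P'}| − (∑_{P ∈ 𝒫_n, P ≠ P'} |q_P|)·sqrt(2ε² − ε⁴) ≤ |Tr(E·Q·P')|/N ≤ |q_{P'}| + (∑_{P ∈ 𝒫_n, P ≠ P'} |q_P|)·sqrt(2ε² − ε⁴). -/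

import Mathlib

/-!
Let `d_s` be the Pauli coefficients of the unitary `P' E`. Because the Pauli matrices form a
basis orthogonal for the trace form, with `Tr (P_s P_t) = N δ_{st}`, one has
`Tr (E Q P') / N = Tr (P' E · Q) / N = ∑_s d_s q_s`, and Parseval gives
`∑_s |d_s|² = Tr ((P' E)ᴴ (P' E)) / N = 1`. The diagonal coefficient `d_{P'} = Tr E / N` has
modulus at least `1 - ε²`, so every other coefficient has modulus at most
`√(1 - (1 - ε²)²) = √(2ε² - ε⁴)`; the triangle inequality applied to
`d_{P'} q_{P'} + ∑_{s ≠ P'} d_s q_s` gives both bounds.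
-/

open Matrix

/-- The four single-qubit Pauli matrices: I, X, Y, Z. -/
noncomputable def pauliOne : Fin 4 → Matrix (Fin 2) (Fin 2) ℂ
  | 0 => 1
  | 1 => !![0, 1; 1, 0]
  | 2 => !![0, -Complex.I; Complex.I, 0]
  | 3 => !![1, 0; 0, -1]

/-- The `n`-qubit Pauli matrix indexed by `s : Fin n → Fin 4`: the `n`-fold
Kronecker (tensor) product of single-qubit Paulis, realized as a matrix on
the index type `Fin n → Fin 2` (of cardinality `2 ^ n`). -/
noncomputable def PauliTensor (n : ℕ) (s : Fin n → Fin 4) :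
    Matrix (Fin n → Fin 2) (Fin n → Fin 2) ℂ :=
  Matrix.of fun x y => ∏ i, pauliOne (s i) (x i) (y i)

namespace Matrix

variable {ι m R : Type*} [Fintype ι] [CommSemiring R]

def piKron (M : ι → Matrix m m R) : Matrix (ι → m) (ι → m) R :=
  of fun x y => ∏ i, M i (x i) (y i)

theorem piKron_apply (M : ι → Matrix m m R) (x y : ι → m) :
    piKron M x y = ∏ i, M i (x i) (y i) := rfl

theorem piKron_one [DecidableEq m] : piKron (fun _ : ι => (1 : Matrix m m R)) = 1 := by
  ext x y
  simp only [piKron_apply, one_apply, Finset.prod_boole, Finset.mem_univ, true_implies,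
    funext_iff]

theorem conjTranspose_piKron [StarRing R] (M : ι → Matrix m m R) :
    (piKron M)ᴴ = piKron fun i => (M i)ᴴ := by
  ext x y
  simp [piKron_apply, conjTranspose_apply]

variable [Fintype m] [DecidableEq ι]

theorem piKron_mul_piKron (M N : ι → Matrix m m R) :
    piKron M * piKron N = piKron fun i => M i * N i := by
  ext x y
  simp only [piKron_apply, mul_apply]
  rw [Fintype.prod_sum fun i a => M i (x i) a * N i a (y i)]
  simp [Finset.prod_mul_distrib]

theorem trace_piKron (M : ι → Matrix m m R) : (piKron M).trace = ∏ i, (M i).trace :=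
  (Fintype.prod_sum fun i a => M i a a).symm

end Matrix

theorem pauliOne_conjTranspose (k : Fin 4) : (pauliOne k)ᴴ = pauliOne k := by
  fin_cases k <;> ext a b <;> fin_cases a <;> fin_cases b <;> simp [pauliOne]

theorem pauliOne_mul_self (k : Fin 4) : pauliOne k * pauliOne k = 1 := by
  fin_cases k <;> ext a b <;> fin_cases a <;> fin_cases b <;> simp [pauliOne]

theorem trace_pauliOne_mul (k l : Fin 4) :
    (pauliOne k * pauliOne l).trace = if k = l then 2 else 0 := by
  fin_cases k <;> fin_cases l <;> simp [pauliOne, trace, Fin.sum_univ_two] <;> norm_num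

theorem sum_pauliOne_apply_mul_apply (a b c d : Fin 2) :
    ∑ k, pauliOne k a b * pauliOne k c d = if a = d ∧ b = c then 2 else 0 := by
  fin_cases a <;> fin_cases b <;> fin_cases c <;> fin_cases d <;>
    simp [pauliOne, Fin.sum_univ_four] <;> norm_num

theorem PauliTensor_eq_piKron (n : ℕ) (s : Fin n → Fin 4) :
    PauliTensor n s = piKron fun i => pauliOne (s i) := rfl

theorem conjTranspose_PauliTensor (n : ℕ) (s : Fin n → Fin 4) :
    (PauliTensor n s)ᴴ = PauliTensor n s := by
  simp only [PauliTensor_eq_piKron, conjTranspose_piKron, pauliOne_conjTranspose]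

theorem PauliTensor_mul_self (n : ℕ) (s : Fin n → Fin 4) :
    PauliTensor n s * PauliTensor n s = 1 := by
  simp only [PauliTensor_eq_piKron, piKron_mul_piKron, pauliOne_mul_self, piKron_one]

theorem PauliTensor_mem_unitaryGroup (n : ℕ) (s : Fin n → Fin 4) :
    PauliTensor n s ∈ unitaryGroup (Fin n → Fin 2) ℂ := by
  rw [mem_unitaryGroup_iff', star_eq_conjTranspose, conjTranspose_PauliTensor,
    PauliTensor_mul_self]

theorem trace_PauliTensor_mul (n : ℕ) (s t : Fin n → Fin 4) :
    (PauliTensor n s * PauliTensor n t).trace = if s = t then 2 ^ n else 0 := by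
  simp only [PauliTensor_eq_piKron, piKron_mul_piKron, trace_piKron, trace_pauliOne_mul,
    Finset.prod_ite_zero, Finset.mem_univ, true_implies, Finset.prod_const, Finset.card_univ,
    Fintype.card_fin, funext_iff]

theorem sum_PauliTensor_apply_mul_apply (n : ℕ) (u v x y : Fin n → Fin 2) :
    ∑ s, PauliTensor n s u v * PauliTensor n s x y = if u = y ∧ v = x then 2 ^ n else 0 := by
  simp only [PauliTensor_eq_piKron, piKron_apply, ← Finset.prod_mul_distrib]
  rw [← Fintype.prod_sum fun i k => pauliOne k (u i) (v i) * pauliOne k (x i) (y i)]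
  simp only [sum_pauliOne_apply_mul_apply, Finset.prod_ite_zero, Finset.mem_univ, true_implies,
    Finset.prod_const, Finset.card_univ, Fintype.card_fin, funext_iff, forall_and]

noncomputable def pauliCoeff (n : ℕ) (A : Matrix (Fin n → Fin 2) (Fin n → Fin 2) ℂ)
    (s : Fin n → Fin 4) : ℂ :=
  (A * PauliTensor n s).trace / 2 ^ n

section pauliCoeff

variable {n : ℕ}

theorem sum_pauliCoeff_smul_PauliTensor (A : Matrix (Fin n → Fin 2) (Fin n → Fin 2) ℂ) :
    ∑ s, pauliCoeff n A s • PauliTensor n s = A := by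
  ext x y
  have expand : ∀ s, (A * PauliTensor n s).trace * PauliTensor n s x y
      = ∑ u, ∑ v, A u v * (PauliTensor n s v u * PauliTensor n s x y) := by
    simp [trace, mul_apply, Finset.sum_mul, mul_assoc]
  simp only [Matrix.sum_apply, Matrix.smul_apply, smul_eq_mul, pauliCoeff, div_mul_eq_mul_div,
    ← Finset.sum_div, expand]
  rw [div_eq_iff (pow_ne_zero n two_ne_zero), Finset.sum_comm]
  simp_rw [Finset.sum_comm (γ := Fin n → Fin 4), ← Finset.mul_sum,
    sum_PauliTensor_apply_mul_apply]
  simp [ite_and]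

theorem sum_pauliCoeff_mul_pauliCoeff (A B : Matrix (Fin n → Fin 2) (Fin n → Fin 2) ℂ) :
    ∑ s, pauliCoeff n A s * pauliCoeff n B s = (A * B).trace / 2 ^ n := by
  conv_rhs => rw [← sum_pauliCoeff_smul_PauliTensor A]
  simp only [Finset.sum_mul, trace_sum, smul_mul, trace_smul, smul_eq_mul, Finset.sum_div,
    mul_div_assoc, pauliCoeff, trace_mul_comm (PauliTensor n _) B]

theorem star_pauliCoeff (A : Matrix (Fin n → Fin 2) (Fin n → Fin 2) ℂ) (s : Fin n → Fin 4) :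
    star (pauliCoeff n A s) = pauliCoeff n Aᴴ s := by
  rw [pauliCoeff, pauliCoeff, star_div₀, ← trace_conjTranspose, conjTranspose_mul,
    conjTranspose_PauliTensor, trace_mul_comm]
  simp

theorem sum_norm_sq_pauliCoeff {U : Matrix (Fin n → Fin 2) (Fin n → Fin 2) ℂ}
    (hU : U ∈ unitaryGroup (Fin n → Fin 2) ℂ) : ∑ s, ‖pauliCoeff n U s‖ ^ 2 = 1 := by
  apply Complex.ofReal_injective
  push_cast
  simp_rw [← Complex.conj_mul', ← Complex.star_def, star_pauliCoeff]
  rw [sum_pauliCoeff_mul_pauliCoeff, ← star_eq_conjTranspose, mem_unitaryGroup_iff'.1 hU,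
    trace_one]
  simp

theorem pauliCoeff_PauliTensor_mul_self (A : Matrix (Fin n → Fin 2) (Fin n → Fin 2) ℂ)
    (s : Fin n → Fin 4) : pauliCoeff n (PauliTensor n s * A) s = A.trace / 2 ^ n := by
  rw [pauliCoeff, trace_mul_cycle, PauliTensor_mul_self, one_mul]

end pauliCoeff

section Perturbation

variable {ι 𝕜 : Type*} [Fintype ι] [DecidableEq ι] [NormedDivisionRing 𝕜]

theorem norm_le_sqrt_one_sub_sq_of_sum_norm_sq_le_one {d : ι → 𝕜}
    (hd : ∑ i, ‖d i‖ ^ 2 ≤ 1) {i j : ι} (hij : i ≠ j) {a : ℝ} (ha : 0 ≤ a) (haj : a ≤ ‖d j‖) :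
    ‖d i‖ ≤ √(1 - a ^ 2) := by
  have hpair : ‖d i‖ ^ 2 + ‖d j‖ ^ 2 ≤ 1 := by
    rw [← Finset.sum_pair (f := fun k => ‖d k‖ ^ 2) hij]
    exact (Finset.sum_le_sum_of_subset_of_nonneg (Finset.subset_univ _)
      fun k _ _ => by positivity).trans hd
  apply Real.le_sqrt_of_sq_le
  nlinarith [pow_le_pow_left₀ ha haj 2]

theorem norm_sum_mul_bounds_of_sum_norm_sq_le_one {d : ι → 𝕜} (hd : ∑ i, ‖d i‖ ^ 2 ≤ 1) (q : ι → 𝕜) (i₀ : ι)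
    {a : ℝ} (ha : 0 ≤ a) (ha₀ : a ≤ ‖d i₀‖) :
    a * ‖q i₀‖ - (∑ i ∈ Finset.univ.erase i₀, ‖q i‖) * √(1 - a ^ 2) ≤ ‖∑ i, d i * q i‖ ∧
      ‖∑ i, d i * q i‖ ≤ ‖q i₀‖ + (∑ i ∈ Finset.univ.erase i₀, ‖q i‖) * √(1 - a ^ 2) := by
  have hrest : ‖∑ i ∈ Finset.univ.erase i₀, d i * q i‖
      ≤ (∑ i ∈ Finset.univ.erase i₀, ‖q i‖) * √(1 - a ^ 2) := by
    rw [Finset.sum_mul]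
    refine (norm_sum_le _ _).trans (Finset.sum_le_sum fun i hi => ?_)
    rw [norm_mul, mul_comm]
    exact mul_le_mul_of_nonneg_left (norm_le_sqrt_one_sub_sq_of_sum_norm_sq_le_one hd
      (Finset.ne_of_mem_erase hi) ha ha₀) (norm_nonneg _)
  have hd₀ : ‖d i₀‖ ≤ 1 := by
    refine (pow_le_one_iff_of_nonneg (norm_nonneg _) two_ne_zero).1 ?_
    exact (Finset.single_le_sum (fun i _ => by positivity) (Finset.mem_univ i₀)).trans hd
  rw [← Finset.add_sum_erase _ _ (Finset.mem_univ i₀)]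
  constructor
  · calc a * ‖q i₀‖ - (∑ i ∈ Finset.univ.erase i₀, ‖q i‖) * √(1 - a ^ 2)
        ≤ ‖d i₀ * q i₀‖ - ‖∑ i ∈ Finset.univ.erase i₀, d i * q i‖ := by
          rw [norm_mul]
          exact sub_le_sub (mul_le_mul_of_nonneg_right ha₀ (norm_nonneg _)) hrest
      _ ≤ _ := norm_sub_le_norm_add _ _
  · calc _ ≤ ‖d i₀ * q i₀‖ + ‖∑ i ∈ Finset.univ.erase i₀, d i * q i‖ := norm_add_le _ _
      _ ≤ _ := by
          rw [norm_mul]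
          exact add_le_add (mul_le_of_le_one_left (norm_nonneg _) hd₀) hrest

end Perturbation

theorem trace_bound_general_general (n : ℕ)
    (ε : ℝ) (hε0 : 0 ≤ ε) (hε1 : ε ≤ 1)
    (E : Matrix (Fin n → Fin 2) (Fin n → Fin 2) ℂ)
    (hE : E ∈ Matrix.unitaryGroup (Fin n → Fin 2) ℂ)
    (hEtr : (2 : ℝ) ^ n * (1 - ε ^ 2) ≤ ‖E.trace‖)
    (Q : Matrix (Fin n → Fin 2) (Fin n → Fin 2) ℂ)
    (q : (Fin n → Fin 4) → ℂ)
    (hq : ∀ s : Fin n → Fin 4, q s = (Q * PauliTensor n s).trace / ((2 : ℂ) ^ n))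
    (s' : Fin n → Fin 4) :
    (1 - ε ^ 2) * ‖q s'‖
        - (∑ s ∈ Finset.univ.filter (fun s => s ≠ s'), ‖q s‖)
            * Real.sqrt (2 * ε ^ 2 - ε ^ 4)
        ≤ ‖(E * Q * PauliTensor n s').trace‖ / (2 : ℝ) ^ n ∧
      ‖(E * Q * PauliTensor n s').trace‖ / (2 : ℝ) ^ n
        ≤ ‖q s'‖
          + (∑ s ∈ Finset.univ.filter (fun s => s ≠ s'), ‖q s‖)
              * Real.sqrt (2 * ε ^ 2 - ε ^ 4) := by
  obtain rfl : q = pauliCoeff n Q := funext hq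
  set d := pauliCoeff n (PauliTensor n s' * E)
  have hnorm_pow : ‖(2 : ℂ) ^ n‖ = 2 ^ n := by simp
  have hd : ∑ s, ‖d s‖ ^ 2 = 1 :=
    sum_norm_sq_pauliCoeff (mul_mem (PauliTensor_mem_unitaryGroup n s') hE)
  have hd_diag : 1 - ε ^ 2 ≤ ‖d s'‖ := by
    rw [show d s' = E.trace / 2 ^ n from pauliCoeff_PauliTensor_mul_self E s', norm_div, hnorm_pow, le_div_iff₀ (by positivity)]
    linarith
  have htrace : ‖(E * Q * PauliTensor n s').trace‖ / 2 ^ n = ‖∑ s, d s * pauliCoeff n Q s‖ := by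
    rw [sum_pauliCoeff_mul_pauliCoeff, norm_div, hnorm_pow, trace_mul_cycle, Matrix.mul_assoc]
  rw [htrace, Finset.filter_ne', show 2 * ε ^ 2 - ε ^ 4 = 1 - (1 - ε ^ 2) ^ 2 by ring]
  exact norm_sum_mul_bounds_of_sum_norm_sq_le_one hd.le _ s' (sub_nonneg.2 (pow_le_one₀ hε0 hε1)) hd_diag

/-- Theorem: for a unitary `E` with `|Tr E| ≥ N (1 - ε²)` and any unitary `Q`
with Pauli coefficients `q_P = Tr (Q * P) / N`, the quantity `|Tr (E * Q * P')| / N`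
is within `(∑_{P ≠ P'} |q_P|) * sqrt (2ε² - ε⁴)` of `|q_{P'}|` (up to the
factor `1 - ε²` in the lower bound). -/
theorem trace_bound_general (n : ℕ) (hn : 1 ≤ n)
    (ε : ℝ) (hε0 : 0 ≤ ε) (hε1 : ε ≤ 1)
    (E : Matrix (Fin n → Fin 2) (Fin n → Fin 2) ℂ)
    (hE : E ∈ Matrix.unitaryGroup (Fin n → Fin 2) ℂ)
    (hEtr : (2 : ℝ) ^ n * (1 - ε ^ 2) ≤ ‖E.trace‖)
    (Q : Matrix (Fin n → Fin 2) (Fin n → Fin 2) ℂ)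
    (hQ : Q ∈ Matrix.unitaryGroup (Fin n → Fin 2) ℂ)
    (q : (Fin n → Fin 4) → ℂ)
    (hq : ∀ s : Fin n → Fin 4, q s = (Q * PauliTensor n s).trace / ((2 : ℂ) ^ n))
    (s' : Fin n → Fin 4) :
    (1 - ε ^ 2) * ‖q s'‖
        - (∑ s ∈ Finset.univ.filter (fun s => s ≠ s'), ‖q s‖)
            * Real.sqrt (2 * ε ^ 2 - ε ^ 4)
        ≤ ‖(E * Q * PauliTensor n s').trace‖ / (2 : ℝ) ^ n ∧
      ‖(E * Q * PauliTensor n s').trace‖ / (2 : ℝ) ^ n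
        ≤ ‖q s'‖
          + (∑ s ∈ Finset.univ.filter (fun s => s ≠ s'), ‖q s‖)
              * Real.sqrt (2 * ε ^ 2 - ε ^ 4) :=
  trace_bound_general_general n ε hε0 hε1 E hE hEtr Q q hq s'
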